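/- Let q > 1 be a real number, m ≥ 1 an integer, κ a real number, and s a complex number with Re(s) > κ. Then 1 + ∑_{a = m}^{∞} q^{-(s-κ)a} = (1 + (q^{-(s-κ)(m+1)} - q^{-2m(s-κ)})/(1 - q^{-(s-κ)})) / (1 - q^{-m(s-κ)}). -/

import Mathlib

/-! With `w = q^{-(s-κ)}` every power of `q` in the statement is a power of `w`, and `‖w‖ < 1`
because `Re(s) > κ`. The tail is then the geometric series `w^m / (1 - w)`, and the identity
becomes `(1 + w^m / (1 - w)) (1 - w^m) = 1 + (w^(m+1) - w^(2m)) / (1 - w)`, which is polynomial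
after clearing the denominator `1 - w`. -/

lemma tsum_geometric_tail_of_norm_lt_one {K : Type*} [NormedDivisionRing K] {ξ : K}
    (h : ‖ξ‖ < 1) (m : ℕ) : ∑' n : ℕ, ξ ^ (m + n) = ξ ^ m * (1 - ξ)⁻¹ := by
  simp_rw [pow_add]
  rw [tsum_mul_left, tsum_geometric_of_norm_lt_one h]

lemma one_add_pow_div_one_sub_mul_one_sub_pow {K : Type*} [Field K] {z : K} (hz : z ≠ 1)
    (m : ℕ) :
    (1 + z ^ m / (1 - z)) * (1 - z ^ m) = 1 + (z ^ (m + 1) - z ^ (2 * m)) / (1 - z) := by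
  have : 1 - z ≠ 0 := sub_ne_zero.mpr hz.symm
  field_simp
  ring

lemma Complex.norm_ofReal_cpow_lt_one {q : ℝ} (hq : 1 < q) {t : ℂ} (ht : t.re < 0) :
    ‖(q : ℂ) ^ t‖ < 1 := by
  rw [Complex.norm_cpow_eq_rpow_re_of_pos (zero_lt_one.trans hq)]
  exact Real.rpow_lt_one_of_one_lt_of_neg hq ht

/-- For a real `q > 1`, integer `m ≥ 1`, real `κ` and complex `s` with `Re(s) > κ`,
`1 + ∑_{a=m}^∞ q^{-(s-κ)a}` equals
`(1 + (q^{-(s-κ)(m+1)} - q^{-2m(s-κ)})/(1 - q^{-(s-κ)})) / (1 - q^{-m(s-κ)})`. -/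
theorem campana_local_factor_identity (q : ℝ) (hq : 1 < q) (m : ℕ) (hm : 1 ≤ m)
    (κ : ℝ) (s : ℂ) (hs : κ < s.re) :
    1 + ∑' n : ℕ, (q : ℂ) ^ (-(s - (κ : ℂ)) * ((m : ℂ) + (n : ℂ))) =
      (1 + ((q : ℂ) ^ (-(s - (κ : ℂ)) * ((m : ℂ) + 1)) -
          (q : ℂ) ^ (-(2 * (m : ℂ)) * (s - (κ : ℂ)))) /
        (1 - (q : ℂ) ^ (-(s - (κ : ℂ))))) /
      (1 - (q : ℂ) ^ (-(m : ℂ) * (s - (κ : ℂ)))) := by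
  set w : ℂ := (q : ℂ) ^ (-(s - (κ : ℂ)))
  have hw : ‖w‖ < 1 := Complex.norm_ofReal_cpow_lt_one hq (by simpa using hs)
  have hpow (k : ℕ) : (q : ℂ) ^ (-(s - (κ : ℂ)) * k) = w ^ k := Complex.cpow_mul_nat _ _ k
  have hwm : w ^ m ≠ 1 := by
    refine ne_of_apply_ne norm ?_
    rw [norm_pow, norm_one]
    exact (pow_lt_one₀ (norm_nonneg w) hw (by omega)).ne
  have hw1 : w ≠ 1 := fun h ↦ hwm (by rw [h, one_pow])
  rw [show -(2 * (m : ℂ)) * (s - κ) = -(s - κ) * ((2 * m : ℕ) : ℂ) by push_cast; ring,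
    show -(m : ℂ) * (s - κ) = -(s - κ) * m by ring, hpow, hpow]
  simp_rw [← Nat.cast_add_one, ← Nat.cast_add, hpow]
  rw [tsum_geometric_tail_of_norm_lt_one hw, ← div_eq_mul_inv,
    eq_div_iff (sub_ne_zero.mpr hwm.symm), one_add_pow_div_one_sub_mul_one_sub_pow hw1]
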